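/- arXiv:1303.7096 — 3 statements merged into one kernel-verified Lean document; each statement's English description precedes it below -/
import Mathlib

section
/- G₂ is a regular elliptic isometry of order 4 fixing a point inside complex hyperbolic space: G₂⁴ = 1, the characteristic polynomial of G₂ has three pairwise distinct complex roots, and the vector p̃₀ = (1, −(3+ω)/4, −1) is an eigenvector of G₂ with ⟨p̃₀, p̃₀⟩ = −1 (a negative vector). -/
set_option maxHeartbeats 1000000

noncomputable section

open Matrix Polynomial

/-- ω = i·√7 -/
def ω : ℂ := Complex.I * Real.sqrt 7

def G₁ : Matrix (Fin 3) (Fin 3) ℂ := !![1, 1, (-1-ω)/2; 0, 1, -1; 0, 0, 1]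

def G₃ : Matrix (Fin 3) (Fin 3) ℂ := !![1, 0, 0; -1, 1, 0; (-1+ω)/2, 1, 1]

def G₂ : Matrix (Fin 3) (Fin 3) ℂ := G₃ * G₁⁻¹ * G₃⁻¹ * G₁

/-- Hermitian form ⟨Z,W⟩ = Z₁·conj(W₃) + Z₂·conj(W₂) + Z₃·conj(W₁). -/
def herm (Z W : Fin 3 → ℂ) : ℂ :=
  Z 0 * (starRingEnd ℂ) (W 2) + Z 1 * (starRingEnd ℂ) (W 1) + Z 2 * (starRingEnd ℂ) (W 0)

def p₀ : Fin 3 → ℂ := ![1, -(3+ω)/4, -1]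

lemma hω : ω * ω = -7 := by
  have h7 : (Real.sqrt 7 : ℂ) * (Real.sqrt 7 : ℂ) = 7 := by
    rw [← Complex.ofReal_mul, Real.mul_self_sqrt (by norm_num)]
    norm_num
  calc ω * ω = (Complex.I * Complex.I) * ((Real.sqrt 7 : ℂ) * (Real.sqrt 7 : ℂ)) := by
        rw [ω]; ring
    _ = -7 := by rw [Complex.I_mul_I, h7]; ring

lemma hG₁inv : G₁⁻¹ = !![1, -1, (-1+ω)/2; 0, 1, 1; 0, 0, 1] := by
  apply Matrix.inv_eq_right_inv
  rw [G₁]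
  ext i j
  fin_cases i <;> fin_cases j <;>
    simp [Matrix.mul_apply, Fin.sum_univ_three, Matrix.one_apply,
      Matrix.vecHead, Matrix.vecTail] <;>
    ring

lemma hG₃inv : G₃⁻¹ = !![1, 0, 0; 1, 1, 0; (-1-ω)/2, -1, 1] := by
  apply Matrix.inv_eq_right_inv
  rw [G₃]
  ext i j
  fin_cases i <;> fin_cases j <;>
    simp [Matrix.mul_apply, Fin.sum_univ_three, Matrix.one_apply,
      Matrix.vecHead, Matrix.vecTail] <;>
    ring

lemma hG₂ : G₂ = !![2, (3-ω)/2, -1; (-3-ω)/2, -1, 0; -1, 0, 0] := by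
  rw [G₂, hG₁inv, hG₃inv, G₁, G₃]
  ext i j
  fin_cases i <;> fin_cases j <;>
    simp [Matrix.mul_apply, Fin.sum_univ_three, Matrix.vecHead, Matrix.vecTail] <;>
    all_goals first
      | linear_combination (1/4 : ℂ) * hω
      | linear_combination (-1/4 : ℂ) * hω
      | linear_combination (ω/8 + 1/8) * hω
      | linear_combination (-ω/8 + 1/8) * hω
      | linear_combination (-ω/8 - 1/8) * hω
      | linear_combination (ω*ω/16 + 7/16) * hω

lemma hG₂sq : G₂ * G₂ = !![1, (3-ω)/2, -2; (-3-ω)/2, -3, (3+ω)/2; -2, (-3+ω)/2, 1] := by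
  rw [hG₂]
  ext i j
  fin_cases i <;> fin_cases j <;>
    simp [Matrix.mul_apply, Fin.sum_univ_three, Matrix.vecHead, Matrix.vecTail] <;>
    all_goals first
      | ring1
      | linear_combination (1/4 : ℂ) * hω
      | linear_combination (-1/4 : ℂ) * hω

theorem stmt2 :
    G₂ ^ 4 = 1 ∧
    (∃ a b c : ℂ, a ≠ b ∧ b ≠ c ∧ a ≠ c ∧
      G₂.charpoly = (X - C a) * (X - C b) * (X - C c)) ∧
    (∃ μ : ℂ, G₂ *ᵥ p₀ = μ • p₀) ∧
    herm p₀ p₀ = -1 := by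
  refine ⟨?_, ?_, ?_, ?_⟩
  · have h4 : G₂ ^ 4 = (G₂ * G₂) * (G₂ * G₂) := by
      rw [show (4 : ℕ) = 2 * 2 from rfl, pow_mul, sq, sq]
    rw [h4, hG₂sq]
    ext i j
    fin_cases i <;> fin_cases j <;>
      simp [Matrix.mul_apply, Fin.sum_univ_three, Matrix.one_apply,
        Matrix.vecHead, Matrix.vecTail] <;>
      all_goals first
        | ring1
        | linear_combination (1/4 : ℂ) * hω
        | linear_combination (-1/4 : ℂ) * hω
        | linear_combination (1/2 : ℂ) * hω
  · refine ⟨1, Complex.I, -Complex.I, ?_, ?_, ?_, ?_⟩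
    · intro h
      have := congrArg Complex.im h
      norm_num at this
    · intro h
      have := congrArg Complex.im h
      norm_num at this
    · intro h
      have := congrArg Complex.im h
      norm_num at this
    · have h1 : (C ((3 - ω)/2)) * (C ((-3 - ω)/2)) = -4 := by
        rw [← C_mul, show (3 - ω)/2 * ((-3 - ω)/2) = -4 by linear_combination (1/4 : ℂ) * hω]
        simp [map_neg, map_ofNat]
      have hIX : (C Complex.I) * (C Complex.I) = -1 := by
        rw [← C_mul, Complex.I_mul_I]; simp
      rw [Matrix.charpoly, Matrix.det_fin_three, hG₂]
      simp [Matrix.charmatrix_apply, Matrix.one_apply, Matrix.vecHead, Matrix.vecTail,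
        map_neg, map_ofNat]
      linear_combination (-(X : ℂ[X])) * h1 + ((X : ℂ[X]) - 1) * hIX
  · refine ⟨1, ?_⟩
    rw [hG₂]
    ext i
    fin_cases i <;>
      simp [p₀, Matrix.mulVec, dotProduct, Fin.sum_univ_three,
        Matrix.vecHead, Matrix.vecTail] <;>
      all_goals first
        | ring1
        | linear_combination (1/8 : ℂ) * hω
        | linear_combination (-1/8 : ℂ) * hω
  · have hc : (starRingEnd ℂ) ω = -ω := by
      simp [ω, Complex.conj_ofReal]
    simp [herm, p₀, hc, map_div₀, map_ofNat]
    first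
      | linear_combination (-1/16 : ℂ) * hω
      | linear_combination (1/16 : ℂ) * hω
end
end

section
/- Each of the eight matrices G₁, G₃, G₂·G₁·G₂⁻¹, G₂⁻¹·G₃·G₂, G₃⁻¹·G₂, G₁⁻¹·G₂, G₂·G₁⁻¹, and G₃·G₁ is a nontrivial unipotent element: for each such matrix M one has (M − 1)³ = 0 and M ≠ 1. -/
/-! Unipotence `(M - 1) ^ k = 0` and nontriviality `M ≠ 1` are preserved by inversion and by
conjugation. Since `G₂ = G₃ G₁⁻¹ G₃⁻¹ G₁`, we have `G₃⁻¹ G₂ = G₁⁻¹ G₃⁻¹ G₁`, `G₂ G₁⁻¹ = G₃ G₁⁻¹ G₃⁻¹`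
and `G₁⁻¹ G₂ = G₁⁻¹ (G₃ G₁⁻¹ G₃⁻¹) G₁`, so seven of the eight matrices are conjugates of `G₁^{±1}`
or `G₃^{±1}`. Only the unitriangular `G₁`, `G₃` and the product `G₃ G₁` are checked entrywise, the
last one using `ω ^ 2 = -7`. -/

noncomputable section

open Matrix

theorem isUnit_of_sub_one_pow_eq_zero {R : Type*} [Ring R] {a : R} {k : ℕ} (h : (a - 1) ^ k = 0) :
    IsUnit a := by
  simpa using IsNilpotent.isUnit_add_one ⟨k, h⟩

namespace Matrix

variable {n R : Type*} [Fintype n] [DecidableEq n] [CommRing R]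

def IsNontrivialUnipotent (k : ℕ) (A : Matrix n n R) : Prop :=
  (A - 1) ^ k = 0 ∧ A ≠ 1

theorem conj_sub_one_pow {A P : Matrix n n R} (hP : IsUnit P) (k : ℕ) :
    (P * A * P⁻¹ - 1) ^ k = P * (A - 1) ^ k * P⁻¹ := by
  have hconj := Units.conj_pow hP.unit (A - 1) k
  rw [coe_units_inv, IsUnit.unit_spec] at hconj
  rw [← hconj, mul_sub, sub_mul, mul_one,
    mul_nonsing_inv P ((isUnit_iff_isUnit_det P).mp hP)]

theorem inv_sub_one_eq {A : Matrix n n R} (hA : IsUnit A) : A⁻¹ - 1 = -A⁻¹ * (A - 1) := by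
  rw [neg_mul, mul_sub, nonsing_inv_mul A ((isUnit_iff_isUnit_det A).mp hA), mul_one, neg_sub]

namespace IsNontrivialUnipotent

variable {k : ℕ} {A P : Matrix n n R}

theorem isUnit (h : IsNontrivialUnipotent k A) : IsUnit A :=
  isUnit_of_sub_one_pow_eq_zero h.1

theorem conj (h : IsNontrivialUnipotent k A) (hP : IsUnit P) :
    IsNontrivialUnipotent k (P * A * P⁻¹) := by
  have hdet := (isUnit_iff_isUnit_det P).mp hP
  refine ⟨by rw [conj_sub_one_pow hP, h.1, mul_zero, zero_mul], fun h1 => h.2 ?_⟩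
  calc A = P⁻¹ * (P * A * P⁻¹) * P := by
        simp only [mul_assoc, nonsing_inv_mul P hdet, mul_one, nonsing_inv_mul_cancel_left _ A hdet]
    _ = 1 := by rw [h1, mul_one, nonsing_inv_mul P hdet]

theorem conj_inv (h : IsNontrivialUnipotent k A) (hP : IsUnit P) :
    IsNontrivialUnipotent k (P⁻¹ * A * P) := by
  simpa [nonsing_inv_nonsing_inv P ((isUnit_iff_isUnit_det P).mp hP)] using
    h.conj (isUnit_nonsing_inv_iff.mpr hP)

theorem inv (h : IsNontrivialUnipotent k A) : IsNontrivialUnipotent k A⁻¹ := by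
  have hA := h.isUnit
  have hdet := (isUnit_iff_isUnit_det A).mp hA
  have hcomm : Commute A⁻¹ A := (nonsing_inv_mul A hdet).trans (mul_nonsing_inv A hdet).symm
  replace hcomm : Commute (-A⁻¹) (A - 1) := (hcomm.sub_right (Commute.one_right _)).neg_left
  refine ⟨by rw [inv_sub_one_eq hA, hcomm.mul_pow, h.1, mul_zero], fun h1 => h.2 ?_⟩
  rw [← nonsing_inv_nonsing_inv A hdet, h1, inv_one]

end IsNontrivialUnipotent

end Matrix

theorem ω_sq : ω ^ 2 = -7 := by
  rw [ω, mul_pow, Complex.I_sq, ← Complex.ofReal_pow, Real.sq_sqrt (by norm_num)]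
  norm_num

theorem isNontrivialUnipotent_G₁ : IsNontrivialUnipotent 3 G₁ := by
  refine ⟨?_, fun h => by simpa [G₁] using congrFun (congrFun h 0) 1⟩
  ext i j
  fin_cases i <;> fin_cases j <;> simp [G₁, pow_three, mul_apply, Fin.sum_univ_three, one_apply]

theorem isNontrivialUnipotent_G₃ : IsNontrivialUnipotent 3 G₃ := by
  refine ⟨?_, fun h => by simpa [G₃] using congrFun (congrFun h 1) 0⟩
  ext i j
  fin_cases i <;> fin_cases j <;> simp [G₃, pow_three, mul_apply, Fin.sum_univ_three, one_apply]

theorem isNontrivialUnipotent_G₃_mul_G₁ : IsNontrivialUnipotent 3 (G₃ * G₁) := by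
  refine ⟨?_, fun h => by
    simpa [G₃, G₁, mul_apply, Fin.sum_univ_three] using congrFun (congrFun h 1) 0⟩
  ext i j
  fin_cases i <;> fin_cases j <;>
    simp [G₃, G₁, pow_three, mul_apply, Fin.sum_univ_three, one_apply] <;> grind [ω_sq]

theorem isUnit_G₂ : IsUnit G₂ :=
  ((isNontrivialUnipotent_G₃.isUnit.mul isNontrivialUnipotent_G₁.inv.isUnit).mul
    isNontrivialUnipotent_G₃.inv.isUnit).mul isNontrivialUnipotent_G₁.isUnit

theorem G₂_mul_G₁_inv : G₂ * G₁⁻¹ = G₃ * G₁⁻¹ * G₃⁻¹ := by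
  rw [G₂, mul_nonsing_inv_cancel_right _ _
    ((isUnit_iff_isUnit_det _).mp isNontrivialUnipotent_G₁.isUnit)]

theorem G₃_inv_mul_G₂ : G₃⁻¹ * G₂ = G₁⁻¹ * G₃⁻¹ * G₁ := by
  rw [G₂, mul_assoc, mul_assoc, mul_assoc,
    nonsing_inv_mul_cancel_left _ _ ((isUnit_iff_isUnit_det _).mp isNontrivialUnipotent_G₃.isUnit)]

theorem G₁_inv_mul_G₂ : G₁⁻¹ * G₂ = G₁⁻¹ * (G₃ * G₁⁻¹ * G₃⁻¹) * G₁ := by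
  simp only [G₂, mul_assoc]

theorem stmt4 :
    ∀ M ∈ ({G₁, G₃, G₂ * G₁ * G₂⁻¹, G₂⁻¹ * G₃ * G₂, G₃⁻¹ * G₂, G₁⁻¹ * G₂,
            G₂ * G₁⁻¹, G₃ * G₁} : Set (Matrix (Fin 3) (Fin 3) ℂ)),
      (M - 1) ^ 3 = 0 ∧ M ≠ 1 := by
  have h₁ := isNontrivialUnipotent_G₁
  have h₃ := isNontrivialUnipotent_G₃
  intro M hM
  simp only [Set.mem_insert_iff, Set.mem_singleton_iff] at hM
  obtain rfl | rfl | rfl | rfl | rfl | rfl | rfl | rfl := hM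
  · exact h₁
  · exact h₃
  · exact h₁.conj isUnit_G₂
  · exact h₃.conj_inv isUnit_G₂
  · rw [G₃_inv_mul_G₂]
    exact h₃.inv.conj_inv h₁.isUnit
  · rw [G₁_inv_mul_G₂]
    exact (h₁.inv.conj h₃.isUnit).conj_inv h₁.isUnit
  · rw [G₂_mul_G₁_inv]
    exact h₁.inv.conj h₃.isUnit
  · exact isNontrivialUnipotent_G₃_mul_G₁
end
end

section
/- With Q = the diagonal matrix diag(1, −1, 1), conjugation by Q carries the inverses of the generators to their entrywise complex conjugates: Q·G₁⁻¹·Q⁻¹ = conj(G₁) and Q·G₃⁻¹·Q⁻¹ = conj(G₃), where conj denotes entrywise complex conjugation. (This realizes the conjugacy ρ₂∘ι ∼ conj(ρ₂) for the inversion automorphism ι: g₁ ↦ g₁⁻¹, g₃ ↦ g₃⁻¹ of the figure eight knot group.) -/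
/-!
The generators are unitriangular, so their inverses are explicit; conjugating by
`Q = diag(1, -1, 1)` negates the entries in positions `(i, j)` with `i + j` odd, and what
is left is absorbed by `conj ω = -ω`.
-/

noncomputable section

open Matrix

/-- Q = diag(1, −1, 1). -/
def Q : Matrix (Fin 3) (Fin 3) ℂ := Matrix.diagonal ![1, -1, 1]

section

variable {R : Type*} [CommRing R]

theorem Matrix.inv_upper_unitriangular_fin_three (a b c : R) :
    (!![1, a, b; 0, 1, c; 0, 0, 1] : Matrix (Fin 3) (Fin 3) R)⁻¹ =
      !![1, -a, a * c - b; 0, 1, -c; 0, 0, 1] := by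
  refine inv_eq_right_inv ?_
  rw [mul_fin_three, one_fin_three]
  congr <;> ring

theorem Matrix.inv_lower_unitriangular_fin_three (a b c : R) :
    (!![1, 0, 0; a, 1, 0; b, c, 1] : Matrix (Fin 3) (Fin 3) R)⁻¹ =
      !![1, 0, 0; -a, 1, 0; a * c - b, -c, 1] := by
  refine inv_eq_right_inv ?_
  rw [mul_fin_three, one_fin_three]
  congr <;> ring

theorem Matrix.diagonal_sign_mul_mul_diagonal_sign_fin_three (a b c d e f g h i : R) :
    diagonal ![1, -1, 1] * !![a, b, c; d, e, f; g, h, i] * diagonal ![1, -1, 1] =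
      !![a, -b, c; -d, e, -f; g, -h, i] := by
  ext j k
  fin_cases j <;> fin_cases k <;> simp

end

theorem Q_inv : Q⁻¹ = Q := by
  refine inv_eq_right_inv ?_
  rw [Q, diagonal_mul_diagonal, ← diagonal_one]
  congr 1
  ext i
  fin_cases i <;> simp

theorem conj_ω : starRingEnd ℂ ω = -ω := by
  simp [ω]

theorem stmt19 :
    Q * G₁⁻¹ * Q⁻¹ = G₁.map (starRingEnd ℂ) ∧
    Q * G₃⁻¹ * Q⁻¹ = G₃.map (starRingEnd ℂ) := by
  rw [Q_inv, G₁, G₃, inv_upper_unitriangular_fin_three, inv_lower_unitriangular_fin_three, Q,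
    diagonal_sign_mul_mul_diagonal_sign_fin_three, diagonal_sign_mul_mul_diagonal_sign_fin_three]
  constructor <;> ext i j <;> fin_cases i <;> fin_cases j <;> simp [conj_ω, map_ofNat] <;> ring
end
end
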